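/- Let Σ be a nonempty finite alphabet and let A be a complete deterministic parity automaton over Σ with n states recognizing the language L = L(A) ⊆ Σ^ω. Let ⋆, 0, 1 be three fresh letters not in Σ and let Σ_⋆ = Σ ∪ {⋆, 0, 1}. Then for every m ≥ 1 with 2^{m−1} ≥ n there exists a complete deterministic parity automaton B over Σ_⋆ with at most n·(m+1) + 1 states such that L(B) ∩ Σ^ω = L and B has an informative right congruence, i.e., for all finite words u, v over Σ_⋆, if u⁻¹L(B) = v⁻¹L(B) then B reaches the same state from its initial state on reading u and on reading v. -/
import Mathlib


/-- The run of a complete deterministic transition system on an infinite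
word. -/
def runT {Q A : Type*} (δ : Q → A → Q) (q0 : Q) (w : ℕ → A) : ℕ → Q
  | 0 => q0
  | n + 1 => δ (runT δ q0 w n) (w n)

/-- The infinity set of the run on `w`: the state-letter pairs occurring
infinitely often. -/
def infSet {Q A : Type*} (δ : Q → A → Q) (q0 : Q) (w : ℕ → A) : Set (Q × A) :=
  {qa | {n | runT δ q0 w n = qa.1 ∧ w n = qa.2}.Infinite}

/-- Acceptance by a complete deterministic parity automaton (on transitions):
the minimal priority occurring infinitely often is even. -/
def parityAccept {Q A : Type*} (δ : Q → A → Q) (κ : Q → A → ℕ) (q0 : Q)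
    (w : ℕ → A) : Prop :=
  Even (sInf ((fun qa : Q × A => κ qa.1 qa.2) '' infSet δ q0 w))

/-- Concatenation of a finite word with an infinite word. -/
def catWord {α : Type*} (u : List α) (w : ℕ → α) : ℕ → α :=
  fun n => if h : n < u.length then u.get ⟨n, h⟩ else w (n - u.length)

/- ### generic lemmas -/

lemma runT_shift {Q A : Type*} (δ : Q → A → Q) (q0 : Q) (w : ℕ → A) (n : ℕ) :
    runT δ q0 w (n + 1) = runT δ (δ q0 (w 0)) (fun k => w (k + 1)) n := by
  induction n with
  | zero => rfl
  | succ n ih => show δ (runT δ q0 w (n+1)) (w (n+1)) = _; rw [ih]; rfl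

lemma catWord_cons {α : Type*} (a : α) (u : List α) (w : ℕ → α) :
    (fun k => catWord (a :: u) w (k + 1)) = catWord u w := by
  funext k
  simp only [catWord, List.length_cons]
  rcases lt_or_ge k u.length with h | h
  · rw [dif_pos (by omega), dif_pos h]; rfl
  · rw [dif_neg (by omega), dif_neg (by omega)]
    congr 1; omega

lemma catWord_zero {α : Type*} (a : α) (u : List α) (w : ℕ → α) :
    catWord (a :: u) w 0 = a := by simp [catWord]

lemma runT_cat {Q A : Type*} (δ : Q → A → Q) (u : List A) (w : ℕ → A) :
    ∀ (q0 : Q) (n : ℕ),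
      runT δ q0 (catWord u w) (u.length + n) = runT δ (List.foldl δ q0 u) w n := by
  induction u with
  | nil =>
    intro q0 n
    have : catWord ([] : List A) w = w := by funext k; simp [catWord]
    rw [this]
    simp only [List.length_nil, Nat.zero_add, List.foldl_nil]
  | cons a u ih =>
    intro q0 n
    have h1 : (a :: u).length + n = (u.length + n) + 1 := by simp; omega
    rw [h1, runT_shift, catWord_zero, catWord_cons, ih]
    rfl

lemma catWord_ge {α : Type*} (u : List α) (w : ℕ → α) (n : ℕ) :
    catWord u w (u.length + n) = w n := by
  simp only [catWord]
  rw [dif_neg (by omega)]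
  congr 1; omega

lemma infSet_cat {Q A : Type*} (δ : Q → A → Q) (q0 : Q) (u : List A) (w : ℕ → A) :
    infSet δ q0 (catWord u w) = infSet δ (List.foldl δ q0 u) w := by
  ext ⟨s, x⟩
  simp only [infSet, Set.mem_setOf_eq]
  constructor
  · intro h
    apply Set.infinite_of_forall_exists_gt
    intro N
    obtain ⟨k, hk, hkN⟩ := h.exists_gt (u.length + N)
    refine ⟨k - u.length, ?_, by omega⟩
    have hk' : k = u.length + (k - u.length) := by omega
    rw [hk', Set.mem_setOf_eq, runT_cat, catWord_ge] at hk
    exact hk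
  · intro h
    apply Set.infinite_of_forall_exists_gt
    intro N
    obtain ⟨k, hk, hkN⟩ := h.exists_gt N
    exact ⟨u.length + k, by rw [Set.mem_setOf_eq, runT_cat, catWord_ge]; exact hk, by omega⟩

lemma parityAccept_cat {Q A : Type*} (δ : Q → A → Q) (κ : Q → A → ℕ) (q0 : Q)
    (u : List A) (w : ℕ → A) :
    parityAccept δ κ q0 (catWord u w) ↔ parityAccept δ κ (List.foldl δ q0 u) w := by
  unfold parityAccept
  rw [infSet_cat]

lemma infSet_nonempty {Q A : Type*} [Finite Q] [Finite A] (δ : Q → A → Q) (q0 : Q)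
    (w : ℕ → A) : (infSet δ q0 w).Nonempty := by
  obtain ⟨y, hy⟩ := Finite.exists_infinite_fiber (fun n => (runT δ q0 w n, w n))
  refine ⟨y, ?_⟩
  rw [infSet, Set.mem_setOf_eq]
  rw [Set.infinite_coe_iff] at hy
  convert hy using 1
  ext n
  simp [Prod.ext_iff]

lemma parityAccept_of_eventually_zero {Q A : Type*} [Finite Q] [Finite A]
    (δ : Q → A → Q) (κ : Q → A → ℕ) (q0 : Q) (w : ℕ → A)
    (h : ∃ N, ∀ n ≥ N, κ (runT δ q0 w n) (w n) = 0) :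
    parityAccept δ κ q0 w := by
  obtain ⟨N, hN⟩ := h
  have himg : (fun qa : Q × A => κ qa.1 qa.2) '' infSet δ q0 w = {0} := by
    rw [← Set.Nonempty.subset_singleton_iff ((infSet_nonempty δ q0 w).image _)]
    rintro c ⟨⟨s, x⟩, hsx, rfl⟩
    obtain ⟨k, hk, hkN⟩ := hsx.exists_gt N
    obtain ⟨h1, h2⟩ := hk
    simp only [Set.mem_singleton_iff]
    rw [show s = runT δ q0 w k from h1.symm, show x = w k from h2.symm]
    exact hN k (by omega)
  rw [parityAccept, himg, csInf_singleton]
  exact Even.zero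

lemma parityReject_of_eventually_one {Q A : Type*} [Finite Q] [Finite A]
    (δ : Q → A → Q) (κ : Q → A → ℕ) (q0 : Q) (w : ℕ → A)
    (h : ∃ N, ∀ n ≥ N, κ (runT δ q0 w n) (w n) = 1) :
    ¬ parityAccept δ κ q0 w := by
  obtain ⟨N, hN⟩ := h
  have himg : (fun qa : Q × A => κ qa.1 qa.2) '' infSet δ q0 w = {1} := by
    rw [← Set.Nonempty.subset_singleton_iff ((infSet_nonempty δ q0 w).image _)]
    rintro c ⟨⟨s, x⟩, hsx, rfl⟩
    obtain ⟨k, hk, hkN⟩ := hsx.exists_gt N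
    obtain ⟨h1, h2⟩ := hk
    simp only [Set.mem_singleton_iff]
    rw [show s = runT δ q0 w k from h1.symm, show x = w k from h2.symm]
    exact hN k (by omega)
  rw [parityAccept, himg, csInf_singleton]
  simp

/- ### The construction -/

section Construction

variable {A Q : Type*}

/-- Transition function of the IRC automaton: a main copy of `Q` (index 0),
gadget states `(q, i)` for `1 ≤ i ≤ m` checking the binary encoding of `q`,
and a sink `none`. -/
def bδ (δ : Q → A → Q) (m : ℕ) (e : Q → Fin m → Bool) :
    Option (Q × Fin (m+1)) → A ⊕ Fin 3 → Option (Q × Fin (m+1))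
  | none, _ => none
  | some (q, i), Sum.inl a =>
      if i.val = 0 then some (δ q a, ⟨0, m.succ_pos⟩) else none
  | some (q, i), Sum.inr c =>
      if hi : i.val = 0 then
        if c = 0 then some (q, ⟨(i.val + 1) % (m+1), Nat.mod_lt _ m.succ_pos⟩)
        else none
      else
        if c = (if e q ⟨i.val - 1, by have := i.isLt; omega⟩ then 1 else 2) then
          some (q, ⟨(i.val + 1) % (m+1), Nat.mod_lt _ m.succ_pos⟩)
        else none

/-- Priority function of the IRC automaton. -/
def bκ (δ : Q → A → Q) (κ : Q → A → ℕ) (m : ℕ) (e : Q → Fin m → Bool) :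
    Option (Q × Fin (m+1)) → A ⊕ Fin 3 → ℕ
  | none, _ => 1
  | some (q, i), Sum.inl a => if i.val = 0 then κ q a else 1
  | some (q, i), Sum.inr c =>
      match bδ δ m e (some (q, i)) (Sum.inr c) with
      | none => 1
      | some _ => 0

/-- The test word for state `(q, i)` : the tail, starting at position `i`, of
the periodic word `(⋆ enc(q))^ω`. -/
def testW (m : ℕ) (e : Q → Fin m → Bool) (q : Q) (i : ℕ) : ℕ → A ⊕ Fin 3 :=
  fun n =>
    if h : (i + n) % (m+1) = 0 then Sum.inr 0
    else Sum.inr (if e q ⟨(i + n) % (m+1) - 1,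
        by have := Nat.mod_lt (i+n) (show 0 < m+1 by omega); omega⟩ then 1 else 2)

variable {m : ℕ} {e : Q → Fin m → Bool} {δ : Q → A → Q} {κ : Q → A → ℕ}

lemma mod_succ_step (a : ℕ) : (a % (m+1) + 1) % (m+1) = (a + 1) % (m+1) := by
  conv_rhs => rw [Nat.add_mod]
  rw [Nat.add_mod (a % (m+1)) 1]
  simp [Nat.mod_mod_of_dvd]

/-- sink is absorbing -/
lemma bδ_none (x : A ⊕ Fin 3) : bδ δ m e none x = none := by cases x <;> rfl

lemma runT_none_absorb (w : ℕ → A ⊕ Fin 3) (s : Option (Q × Fin (m+1))) (N : ℕ)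
    (hN : runT (bδ δ m e) s w N = none) :
    ∀ n, N ≤ n → runT (bδ δ m e) s w n = none := by
  intro n hn
  induction n with
  | zero => simpa [Nat.le_zero.mp hn] using hN
  | succ k ih =>
    rcases Nat.lt_or_ge N (k+1) with h | h
    · show bδ δ m e _ _ = none
      rw [ih (by omega), bδ_none]
    · have : N = k + 1 := by omega
      rwa [← this]

/-- any `inr` transition from a live state either dies or increments the
counter (keeping the `Q`-component). -/
lemma bδ_inr (q : Q) (l : Fin (m+1)) (c : Fin 3) :
    bδ δ m e (some (q, l)) (Sum.inr c) = none ∨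
    bδ δ m e (some (q, l)) (Sum.inr c)
      = some (q, ⟨(l.val + 1) % (m+1), Nat.mod_lt _ m.succ_pos⟩) := by
  show (if hi : l.val = 0 then _ else _) = none ∨ (if hi : l.val = 0 then _ else _) = _
  split_ifs <;> simp

/-- the run on any all-`inr` word keeps the `Q`-component and counts modulo
`m+1`, unless it dies. -/
lemma runT_inr (w : ℕ → A ⊕ Fin 3) (hw : ∀ n, ∃ c, w n = Sum.inr c)
    (q : Q) (j : Fin (m+1)) (n : ℕ) :
    runT (bδ δ m e) (some (q, j)) w n = none ∨
    runT (bδ δ m e) (some (q, j)) w n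
      = some (q, ⟨(j.val + n) % (m+1), Nat.mod_lt _ m.succ_pos⟩) := by
  induction n with
  | zero =>
    right
    simp [runT, Nat.mod_eq_of_lt j.isLt]
  | succ k ih =>
    have hrun : runT (bδ δ m e) (some (q, j)) w (k+1)
        = bδ δ m e (runT (bδ δ m e) (some (q, j)) w k) (w k) := rfl
    rcases ih with h | h
    · left; rw [hrun, h, bδ_none]
    · obtain ⟨c, hc⟩ := hw k
      rw [hrun, h, hc]
      rcases bδ_inr (e := e) (δ := δ) q
          ⟨(j.val + k) % (m+1), Nat.mod_lt _ m.succ_pos⟩ c with h2 | h2 <;> rw [h2]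
      · left; rfl
      · right
        simp only [Option.some.injEq, Prod.mk.injEq, Fin.mk.injEq]
        exact ⟨trivial, by rw [mod_succ_step, Nat.add_assoc]⟩


/- equation lemmas for `bδ`, `bκ` -/

lemma bδ_mk_inl (q : Q) (v : ℕ) (hv : v < m+1) (a : A) :
    bδ δ m e (some (q, ⟨v, hv⟩)) (Sum.inl a)
      = if v = 0 then some (δ q a, ⟨0, m.succ_pos⟩) else none := rfl

lemma bδ_mk_inr_zero (q : Q) (hv : (0:ℕ) < m+1) (c : Fin 3) :
    bδ δ m e (some (q, ⟨0, hv⟩)) (Sum.inr c)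
      = if c = 0 then some (q, ⟨(0 + 1) % (m+1), Nat.mod_lt _ m.succ_pos⟩)
        else none := by
  simp only [bδ]
  rw [dif_pos trivial]

lemma bδ_mk_inr_pos (q : Q) (v : ℕ) (hv : v < m+1) (h0 : v ≠ 0) (c : Fin 3) :
    bδ δ m e (some (q, ⟨v, hv⟩)) (Sum.inr c)
      = if c = (if e q ⟨v - 1, by omega⟩ then 1 else 2) then
          some (q, ⟨(v + 1) % (m+1), Nat.mod_lt _ m.succ_pos⟩)
        else none := by
  simp only [bδ]
  rw [dif_neg h0]

lemma bκ_none (x : A ⊕ Fin 3) : bκ δ κ m e none x = 1 := by cases x <;> rfl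

lemma bκ_some_inl (q : Q) (i : Fin (m+1)) (a : A) :
    bκ δ κ m e (some (q, i)) (Sum.inl a) = if i.val = 0 then κ q a else 1 := rfl

lemma bκ_some_inr_live (q : Q) (i : Fin (m+1)) (c : Fin 3)
    (h : bδ δ m e (some (q, i)) (Sum.inr c) ≠ none) :
    bκ δ κ m e (some (q, i)) (Sum.inr c) = 0 := by
  have heq : bκ δ κ m e (some (q, i)) (Sum.inr c)
      = match bδ δ m e (some (q, i)) (Sum.inr c) with
        | none => 1
        | some _ => 0 := rfl
  rcases hd : bδ δ m e (some (q, i)) (Sum.inr c) with _ | p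
  · exact absurd hd h
  · rw [heq, hd]

/- the test word is accepted from its own state -/

lemma testW_eq_star (q : Q) (i n : ℕ) (h : (i + n) % (m+1) = 0) :
    testW (A := A) m e q i n = Sum.inr 0 := by
  unfold testW; rw [dif_pos h]

lemma testW_eq_bit (q : Q) (i n r : ℕ) (h : (i + n) % (m+1) = r) (h0 : r ≠ 0)
    (h1 : r - 1 < m) :
    testW (A := A) m e q i n = Sum.inr (if e q ⟨r - 1, h1⟩ then 1 else 2) := by
  subst h
  unfold testW
  rw [dif_neg h0]

lemma testW_inr (q : Q) (i n : ℕ) :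
    ∃ c, testW (A := A) m e q i n = Sum.inr c := by
  unfold testW; split <;> exact ⟨_, rfl⟩

lemma bδ_testW_self (q : Q) (i k : ℕ) :
    bδ δ m e (some (q, ⟨(i + k) % (m+1), Nat.mod_lt _ m.succ_pos⟩))
        (testW m e q i k)
      = some (q, ⟨(i + (k+1)) % (m+1), Nat.mod_lt _ m.succ_pos⟩) := by
  have key : ((i + k) % (m+1) + 1) % (m+1) = (i + (k+1)) % (m+1) := by
    rw [mod_succ_step, Nat.add_assoc]
  by_cases h : (i + k) % (m+1) = 0
  · rw [testW_eq_star q i k h]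
    have hs : (⟨(i+k) % (m+1), Nat.mod_lt _ m.succ_pos⟩ : Fin (m+1))
        = ⟨0, m.succ_pos⟩ := by simp only [Fin.mk.injEq]; exact h
    rw [hs, bδ_mk_inr_zero, if_pos rfl]
    simp only [Option.some.injEq, Prod.mk.injEq, Fin.mk.injEq]
    refine ⟨trivial, ?_⟩
    rw [← key, h]
  · have h1 : (i + k) % (m+1) - 1 < m := by
      have := Nat.mod_lt (i+k) (show 0 < m+1 by omega); omega
    rw [testW_eq_bit q i k _ rfl h h1, bδ_mk_inr_pos q _ _ h, if_pos rfl]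
    simp only [Option.some.injEq, Prod.mk.injEq, Fin.mk.injEq]
    exact ⟨trivial, key⟩

lemma runT_testW_self (q : Q) (i : ℕ) (hi : i < m+1) (n : ℕ) :
    runT (bδ δ m e) (some (q, ⟨i, hi⟩)) (testW m e q i) n
      = some (q, ⟨(i + n) % (m+1), Nat.mod_lt _ m.succ_pos⟩) := by
  induction n with
  | zero =>
    show some _ = _
    simp [Nat.mod_eq_of_lt hi]
  | succ k ih =>
    have hrun : runT (bδ δ m e) (some (q, ⟨i, hi⟩)) (testW m e q i) (k+1)
        = bδ δ m e (runT (bδ δ m e) (some (q, ⟨i, hi⟩)) (testW m e q i) k)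
            (testW m e q i k) := rfl
    rw [hrun, ih, bδ_testW_self]

lemma accept_test_self [Fintype Q] [Fintype A] (q : Q) (i : ℕ) (hi : i < m+1) :
    parityAccept (bδ δ m e) (bκ δ κ m e) (some (q, ⟨i, hi⟩)) (testW m e q i) := by
  apply parityAccept_of_eventually_zero
  refine ⟨0, fun n _ => ?_⟩
  rw [runT_testW_self q i hi n]
  obtain ⟨c, hc⟩ := testW_inr (e := e) q i n
  rw [hc]
  apply bκ_some_inr_live
  rw [← hc, bδ_testW_self]
  simp


lemma bδ_ne_none_inr (q' : Q) (v : ℕ) (hv : v < m+1) (c : Fin 3)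
    (h : bδ δ m e (some (q', ⟨v, hv⟩)) (Sum.inr c) ≠ none) :
    (v = 0 ∧ c = 0) ∨
    (v ≠ 0 ∧ ∃ h1 : v - 1 < m, c = (if e q' ⟨v - 1, h1⟩ then 1 else 2)) := by
  by_cases h0 : v = 0
  · subst h0
    rw [bδ_mk_inr_zero] at h
    left
    refine ⟨rfl, ?_⟩
    by_contra hc
    rw [if_neg hc] at h
    exact h rfl
  · rw [bδ_mk_inr_pos q' v hv h0] at h
    right
    refine ⟨h0, ⟨by have := hv; omega, ?_⟩⟩
    by_contra hc
    rw [if_neg hc] at h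
    exact h rfl

lemma accept_test_iff [Fintype Q] [Fintype A] (he : Function.Injective e)
    (s : Option (Q × Fin (m+1))) (q : Q) (i : Fin (m+1)) :
    parityAccept (bδ δ m e) (bκ δ κ m e) s (testW m e q i.val) ↔
      s = some (q, i) := by
  constructor
  · intro hacc
    by_contra hne
    rcases s with _ | ⟨q', j⟩
    · -- from the sink everything is rejected
      refine absurd hacc (parityReject_of_eventually_one _ _ _ _ ⟨0, fun n _ => ?_⟩)
      have hrun : runT (bδ δ m e) none (testW m e q i.val) n = none :=
        runT_none_absorb _ _ 0 rfl n (Nat.zero_le n)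
      rw [hrun, bκ_none]
    · by_cases hdead : ∃ N, runT (bδ δ m e) (some (q', j)) (testW m e q i.val) N = none
      · obtain ⟨N, hN⟩ := hdead
        refine absurd hacc (parityReject_of_eventually_one _ _ _ _ ⟨N, fun n hn => ?_⟩)
        rw [runT_none_absorb _ _ N hN n hn, bκ_none]
      · push_neg at hdead
        have hstate : ∀ n, runT (bδ δ m e) (some (q', j)) (testW m e q i.val) n
            = some (q', ⟨(j.val + n) % (m+1), Nat.mod_lt _ m.succ_pos⟩) :=
          fun n => (runT_inr _ (testW_inr q i.val) q' j n).resolve_left (hdead n)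
        have hsucc : ∀ n, runT (bδ δ m e) (some (q', j)) (testW m e q i.val) (n+1)
            = bδ δ m e (runT (bδ δ m e) (some (q', j)) (testW m e q i.val) n)
                (testW m e q i.val n) := fun n => rfl
        have hsurv : ∀ n, bδ δ m e
            (some (q', ⟨(j.val + n) % (m+1), Nat.mod_lt _ m.succ_pos⟩))
            (testW m e q i.val n) ≠ none := by
          intro n hd
          exact hdead (n+1) (by rw [hsucc n, hstate n]; exact hd)
        -- first claim : j = i
        have hji : j.val = i.val := by
          set n₁ := m + 1 - i.val with hn₁def
          have hi' := i.isLt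
          have hmod : (i.val + n₁) % (m+1) = 0 := by
            rw [show i.val + n₁ = m+1 by omega, Nat.mod_self]
          have hlet := testW_eq_star (A := A) (e := e) q i.val n₁ hmod
          have h2 := hsurv n₁
          rw [hlet] at h2
          rcases bδ_ne_none_inr q' _ (Nat.mod_lt _ m.succ_pos) 0 h2 with
            ⟨h3, -⟩ | ⟨-, hx1, h4⟩
          · -- (j + n₁) % (m+1) = 0 forces j = i
            obtain ⟨t, ht⟩ := Nat.dvd_of_mod_eq_zero h3
            have hj' := j.isLt
            rcases t with _ | _ | t
            · omega
            · omega
            · have hexp : (m+1) * (t+1+1) = (m+1) * t + (m+1) + (m+1) := by ring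
              omega
          · -- star is not a bit
            split_ifs at h4 <;> exact absurd h4 (by decide)
        -- second claim : e q' = e q
        have heq : e q' = e q := by
          funext k
          have hkm := k.isLt
          have hi' := i.isLt
          set r := k.val + 1 with hrdef
          set n := (m + 1 - i.val) + r with hndef
          have hmod : (i.val + n) % (m+1) = r := by
            rw [show i.val + n = (m+1) + r by omega, Nat.add_mod_left,
              Nat.mod_eq_of_lt (by omega)]
          have h1r : r - 1 < m := by omega
          have hlet := testW_eq_bit (A := A) (e := e) q i.val n r hmod (by omega) h1r
          have h2 := hsurv n
          rw [hlet] at h2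
          rcases bδ_ne_none_inr q' _ (Nat.mod_lt _ m.succ_pos) _ h2 with
            ⟨h3, -⟩ | ⟨-, h4, h5⟩
          · rw [hji, hmod] at h3; omega
          · have hv : (j.val + n) % (m+1) = r := by rw [hji]; exact hmod
            have hidx : (⟨(j.val + n) % (m+1) - 1, h4⟩ : Fin m) = k := by
              apply Fin.ext
              show (j.val + n) % (m+1) - 1 = k.val
              omega
            rw [hidx] at h5
            have hkk : (⟨r - 1, h1r⟩ : Fin m) = k := by
              apply Fin.ext
              show r - 1 = k.val
              omega
            rw [hkk] at h5
            rcases hbq : e q k <;> rcases hbq' : e q' k <;>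
              rw [hbq, hbq'] at h5 <;>
              first
              | rfl
              | exact absurd h5 (by decide)
        exact hne (by rw [he heq, Fin.ext hji])
  · rintro rfl
    exact accept_test_self q i.val i.isLt


/- the main copy simulates the original automaton on pure `Σ`-words -/

lemma runT_inl (w : ℕ → A) (q0 : Q) (n : ℕ) :
    runT (bδ δ m e) (some (q0, ⟨0, m.succ_pos⟩)) (fun j => Sum.inl (w j)) n
      = some (runT δ q0 w n, ⟨0, m.succ_pos⟩) := by
  induction n with
  | zero => rfl
  | succ k ih =>
    have hrun : runT (bδ δ m e) (some (q0, ⟨0, m.succ_pos⟩))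
          (fun j => Sum.inl (w j)) (k+1)
        = bδ δ m e (runT (bδ δ m e) (some (q0, ⟨0, m.succ_pos⟩))
            (fun j => Sum.inl (w j)) k) (Sum.inl (w k)) := rfl
    rw [hrun, ih, bδ_mk_inl, if_pos rfl]
    rfl

lemma infSet_inl_iff (w : ℕ → A) (q0 : Q)
    (p : Option (Q × Fin (m+1)) × (A ⊕ Fin 3)) :
    p ∈ infSet (bδ δ m e) (some (q0, ⟨0, m.succ_pos⟩)) (fun j => Sum.inl (w j)) ↔
      ∃ q a, p = (some (q, ⟨0, m.succ_pos⟩), Sum.inl a) ∧ (q, a) ∈ infSet δ q0 w := by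
  constructor
  · intro hp
    obtain ⟨n, hn1, hn2⟩ := hp.nonempty
    rw [runT_inl] at hn1
    refine ⟨runT δ q0 w n, w n, Prod.ext hn1.symm hn2.symm, ?_⟩
    rw [infSet, Set.mem_setOf_eq] at hp ⊢
    have hEq : {k | runT (bδ δ m e) (some (q0, ⟨0, m.succ_pos⟩))
          (fun j => Sum.inl (w j)) k = p.1 ∧ (fun j => Sum.inl (w j)) k = p.2}
        = {k | runT δ q0 w k = runT δ q0 w n ∧ w k = w n} := by
      ext k
      simp only [Set.mem_setOf_eq, runT_inl, ← hn1, ← hn2, Option.some.injEq,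
        Prod.mk.injEq, Sum.inl.injEq]
      constructor
      · rintro ⟨⟨h1, -⟩, h2⟩; exact ⟨h1, h2⟩
      · rintro ⟨h1, h2⟩; exact ⟨⟨h1, trivial⟩, h2⟩
    rw [hEq] at hp
    exact hp
  · rintro ⟨q, a, rfl, hqa⟩
    rw [infSet, Set.mem_setOf_eq] at hqa ⊢
    have hEq : {k | runT (bδ δ m e) (some (q0, ⟨0, m.succ_pos⟩))
          (fun j => Sum.inl (w j)) k = some (q, ⟨0, m.succ_pos⟩)
          ∧ (fun j => (Sum.inl (w j) : A ⊕ Fin 3)) k = Sum.inl a}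
        = {k | runT δ q0 w k = q ∧ w k = a} := by
      ext k
      simp only [Set.mem_setOf_eq, runT_inl, Option.some.injEq, Prod.mk.injEq,
        Sum.inl.injEq]
      constructor
      · rintro ⟨⟨h1, -⟩, h2⟩; exact ⟨h1, h2⟩
      · rintro ⟨h1, h2⟩; exact ⟨⟨h1, trivial⟩, h2⟩
    rw [hEq]
    exact hqa

lemma parityAccept_inl (w : ℕ → A) (q0 : Q) :
    parityAccept (bδ δ m e) (bκ δ κ m e) (some (q0, ⟨0, m.succ_pos⟩))
        (fun j => Sum.inl (w j))
      ↔ parityAccept δ κ q0 w := by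
  unfold parityAccept
  have himg : ((fun qa : Option (Q × Fin (m+1)) × (A ⊕ Fin 3) => bκ δ κ m e qa.1 qa.2)
        '' infSet (bδ δ m e) (some (q0, ⟨0, m.succ_pos⟩)) (fun j => Sum.inl (w j)))
      = ((fun qa : Q × A => κ qa.1 qa.2) '' infSet δ q0 w) := by
    ext c
    constructor
    · rintro ⟨p, hp, rfl⟩
      rw [infSet_inl_iff] at hp
      obtain ⟨q, a, rfl, hqa⟩ := hp
      refine ⟨(q, a), hqa, ?_⟩
      show κ q a = bκ δ κ m e (some (q, ⟨0, m.succ_pos⟩)) (Sum.inl a)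
      rw [bκ_some_inl, if_pos rfl]
    · rintro ⟨⟨q, a⟩, hqa, rfl⟩
      refine ⟨(some (q, ⟨0, m.succ_pos⟩), Sum.inl a),
        (infSet_inl_iff w q0 _).mpr ⟨q, a, rfl, hqa⟩, ?_⟩
      show bκ δ κ m e (some (q, ⟨0, m.succ_pos⟩)) (Sum.inl a) = κ q a
      rw [bκ_some_inl, if_pos rfl]
  rw [himg]

/- residual languages determine states -/

lemma residual_inj [Fintype Q] [Fintype A] (he : Function.Injective e)
    (s t : Option (Q × Fin (m+1)))
    (h : ∀ w : ℕ → A ⊕ Fin 3,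
      parityAccept (bδ δ m e) (bκ δ κ m e) s w ↔
        parityAccept (bδ δ m e) (bκ δ κ m e) t w) :
    s = t := by
  rcases ht : t with _ | ⟨q, i⟩
  · rcases hs : s with _ | ⟨q', i'⟩
    · rfl
    · have h1 : parityAccept (bδ δ m e) (bκ δ κ m e) s (testW m e q' i'.val) :=
        (accept_test_iff he s q' i').mpr hs
      have h2 := (h _).mp h1
      have h3 := (accept_test_iff he t q' i').mp h2
      rw [ht] at h3
      exact absurd h3 (by simp)
  · have h1 : parityAccept (bδ δ m e) (bκ δ κ m e) t (testW m e q i.val) :=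
      (accept_test_iff he t q i).mpr ht
    have h2 := (h _).mpr h1
    rw [accept_test_iff he] at h2
    rw [h2]

end Construction

/- ### transport along a bijection of states -/

lemma runT_conj {Q P A : Type*} (φ : Q ≃ P) (δ : Q → A → Q) (q0 : Q)
    (w : ℕ → A) (n : ℕ) :
    runT (fun p a => φ (δ (φ.symm p) a)) (φ q0) w n = φ (runT δ q0 w n) := by
  induction n with
  | zero => rfl
  | succ k ih =>
    show (fun p a => φ (δ (φ.symm p) a)) (runT _ (φ q0) w k) (w k) = _
    rw [ih]
    simp only [Equiv.symm_apply_apply]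
    rfl

lemma parityAccept_conj {Q P A : Type*} (φ : Q ≃ P) (δ : Q → A → Q)
    (κ : Q → A → ℕ) (q0 : Q) (w : ℕ → A) :
    parityAccept (fun p a => φ (δ (φ.symm p) a)) (fun p a => κ (φ.symm p) a)
        (φ q0) w
      ↔ parityAccept δ κ q0 w := by
  unfold parityAccept
  have himg : ((fun pa : P × A => κ (φ.symm pa.1) pa.2)
        '' infSet (fun p a => φ (δ (φ.symm p) a)) (φ q0) w)
      = ((fun qa : Q × A => κ qa.1 qa.2) '' infSet δ q0 w) := by
    ext c
    constructor
    · rintro ⟨⟨p, a⟩, hp, rfl⟩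
      refine ⟨(φ.symm p, a), ?_, rfl⟩
      rw [infSet, Set.mem_setOf_eq] at hp ⊢
      have hEq : {k | runT δ q0 w k = φ.symm p ∧ w k = a}
          = {k | runT (fun p a => φ (δ (φ.symm p) a)) (φ q0) w k = p ∧ w k = a} := by
        ext k
        rw [Set.mem_setOf_eq, Set.mem_setOf_eq, runT_conj]
        constructor
        · rintro ⟨h1, h2⟩; exact ⟨by rw [h1]; simp, h2⟩
        · rintro ⟨h1, h2⟩; exact ⟨by rw [← h1]; simp, h2⟩
      rw [hEq]
      exact hp
    · rintro ⟨⟨q, a⟩, hq, rfl⟩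
      refine ⟨(φ q, a), ?_, by simp⟩
      rw [infSet, Set.mem_setOf_eq] at hq ⊢
      have hEq : {k | runT (fun p a => φ (δ (φ.symm p) a)) (φ q0) w k = φ q ∧ w k = a}
          = {k | runT δ q0 w k = q ∧ w k = a} := by
        ext k
        rw [Set.mem_setOf_eq, Set.mem_setOf_eq, runT_conj]
        simp
      rw [hEq]
      exact hq
  rw [himg]

/-- For every complete DPA `A` with `n` states over a nonempty
finite alphabet `Σ` recognizing `L`, and every `m ≥ 1` with `2^(m-1) ≥ n`,
there is a complete DPA `B` over the extended alphabet `Σ ∪ {⋆, 0, 1}`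
(modelled as `Σ ⊕ Fin 3`) with at most `n·(m+1) + 1` states such that
`L(B) ∩ Σ^ω = L` and `B` has an informative right congruence: words with
equal residual languages of `L(B)` lead from the initial state of `B` to the
same state. -/
theorem exists_irc_extension {A : Type*} [Fintype A] [Nonempty A]
    {Q : Type*} [Fintype Q]
    (q0 : Q) (δ : Q → A → Q) (κ : Q → A → ℕ)
    (n m : ℕ) (hn : Fintype.card Q = n) (hm : 1 ≤ m) (hpow : n ≤ 2 ^ (m - 1)) :
    ∃ (QB : Type) (_ : Fintype QB) (qB0 : QB)
      (δB : QB → A ⊕ Fin 3 → QB) (κB : QB → A ⊕ Fin 3 → ℕ),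
      Fintype.card QB ≤ n * (m + 1) + 1 ∧
      (∀ w : ℕ → A,
        parityAccept δB κB qB0 (fun j => Sum.inl (w j)) ↔
          parityAccept δ κ q0 w) ∧
      ∀ u v : List (A ⊕ Fin 3),
        {w | parityAccept δB κB qB0 (catWord u w)} =
          {w | parityAccept δB κB qB0 (catWord v w)} →
        List.foldl δB qB0 u = List.foldl δB qB0 v := by
  classical
  let φ : Q ≃ Fin n := (Fintype.equivFin Q).trans (finCongr hn)
  have hcard : Fintype.card (Fin n) ≤ Fintype.card (Fin m → Bool) := by
    rw [Fintype.card_fin, Fintype.card_fun, Fintype.card_bool, Fintype.card_fin]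
    calc n ≤ 2 ^ (m - 1) := hpow
      _ ≤ 2 ^ m := Nat.pow_le_pow_right (by norm_num) (Nat.sub_le m 1)
  obtain ⟨emb⟩ := Function.Embedding.nonempty_of_card_le hcard
  have he : Function.Injective (emb : Fin n → Fin m → Bool) := emb.injective
  set δ' : Fin n → A → Fin n := fun p a => φ (δ (φ.symm p) a) with hδ'
  set κ' : Fin n → A → ℕ := fun p a => κ (φ.symm p) a with hκ'
  refine ⟨Option (Fin n × Fin (m+1)), (inferInstance : Fintype (Option (Fin n × Fin (m+1)))),
    some (φ q0, ⟨0, m.succ_pos⟩), bδ δ' m emb, bκ δ' κ' m emb, ?_, ?_, ?_⟩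
  · rw [Fintype.card_option, Fintype.card_prod, Fintype.card_fin, Fintype.card_fin]
  · intro w
    rw [parityAccept_inl]
    exact parityAccept_conj φ δ κ q0 w
  · intro u v huv
    refine residual_inj (A := A) (δ := δ') (κ := κ') he _ _ fun w => ?_
    rw [← parityAccept_cat, ← parityAccept_cat]
    exact Set.ext_iff.mp huv w
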